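/- For conjunction monitors, rejection requires both conjuncts to reject along the same trace: rej(q, m₁ × m₂) implies rej(q, m₁) and rej(q, m₂). -/

import Mathlib

/-- Actions: names and co-names. -/
inductive Act : Type where
  | pos : Nat → Act
  | neg : Nat → Act
deriving DecidableEq

/-- Complementation (dual) of actions. -/
def Act.dual : Act → Act
  | .pos n => .neg n
  | .neg n => .pos n

/-- Server contracts. -/
inductive Srv : Type where
  | nil : Srv
  | pre : Act → Srv → Srv
  | ext : Srv → Srv → Srv
  | int : Srv → Srv → Srv
deriving DecidableEq

/-- Client contracts (additionally with success `ok`). -/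
inductive Cli : Type where
  | nil : Cli
  | ok : Cli
  | pre : Act → Cli → Cli
  | ext : Cli → Cli → Cli
  | int : Cli → Cli → Cli
deriving DecidableEq

/-- Server LTS; label `none` is the silent action τ. -/
inductive SStep : Srv → Option Act → Srv → Prop where
  | pre : ∀ (a : Act) (p : Srv), SStep (.pre a p) (some a) p
  | extL : ∀ {p ℓ p'} (q : Srv), SStep p ℓ p' → SStep (.ext p q) ℓ p'
  | extR : ∀ {q ℓ q'} (p : Srv), SStep q ℓ q' → SStep (.ext p q) ℓ q'
  | intL : ∀ (p q : Srv), SStep (.int p q) none p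
  | intR : ∀ (p q : Srv), SStep (.int p q) none q

/-- Client LTS; label `none` is τ.  `ok` and `nil` have no transitions. -/
inductive CStep : Cli → Option Act → Cli → Prop where
  | pre : ∀ (a : Act) (r : Cli), CStep (.pre a r) (some a) r
  | extL : ∀ {r ℓ r'} (s : Cli), CStep r ℓ r' → CStep (.ext r s) ℓ r'
  | extR : ∀ {s ℓ s'} (r : Cli), CStep s ℓ s' → CStep (.ext r s) ℓ s'
  | intL : ∀ (r s : Cli), CStep (.int r s) none r
  | intR : ∀ (r s : Cli), CStep (.int r s) none s

/-- System τ-transitions for a client-server system `r ∥ p`. -/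
inductive SysStep : Cli × Srv → Cli × Srv → Prop where
  | srv : ∀ {p p'} (r : Cli), SStep p none p' → SysStep (r, p) (r, p')
  | cli : ∀ {r r'} (p : Srv), CStep r none r' → SysStep (r, p) (r', p)
  | syn : ∀ {r r' p p' a}, CStep r (some (Act.dual a)) r' → SStep p (some a) p' →
      SysStep (r, p) (r', p')

/-- `Sat p r`: every maximal computation from `r ∥ p` is successful. -/
def Sat (p : Srv) (r : Cli) : Prop :=
  ∀ s q, Relation.ReflTransGen SysStep (r, p) (s, q) →
    (¬ ∃ x, SysStep (s, q) x) → s = Cli.ok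

/-- The server (subcontract) preorder. -/
def SrvPre (p q : Srv) : Prop := ∀ r, Sat p r → Sat q r

/-- Monitor verdicts: acceptance, rejection, inconclusive. -/
inductive Verd : Type where
  | yes : Verd
  | no : Verd
  | stp : Verd
deriving DecidableEq

/-- Monitors. -/
inductive Mon : Type where
  | verd : Verd → Mon
  | act : Act → Mon → Mon
  | nact : Act → Mon → Mon
  | choice : Mon → Mon → Mon
  | conj : Mon → Mon → Mon
deriving DecidableEq

/-- Monitor LTS (on visible actions only); verdicts persist. -/
inductive MStep : Mon → Act → Mon → Prop where
  | verd : ∀ (v : Verd) (a : Act), MStep (.verd v) a (.verd v)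
  | act : ∀ (a : Act) (m : Mon), MStep (.act a m) a m
  | nact : ∀ {b a : Act} (m : Mon), b ≠ a → MStep (.nact a m) b m
  | chL : ∀ {m a m'} (n : Mon), MStep m a m' → MStep (.choice m n) a m'
  | chR : ∀ {n a n'} (m : Mon), MStep n a n' → MStep (.choice m n) a n'
  | conj : ∀ {m a m' n n'}, MStep m a m' → MStep n a n' →
      MStep (.conj m n) a (.conj m' n')

/-- Instrumentation of a monitor over a server: `m ◁ p`. -/
inductive IStep : Mon × Srv → Option Act → Mon × Srv → Prop where
  | mon : ∀ {m p a m' p'}, SStep p (some a) p' → MStep m a m' →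
      IStep (m, p) (some a) (m', p')
  | ter : ∀ {m p a p'}, SStep p (some a) p' → (¬ ∃ m', MStep m a m') →
      IStep (m, p) (some a) (.verd .stp, p')
  | asy : ∀ {p p'} (m : Mon), SStep p none p' → IStep (m, p) none (m, p')

/-- Reachability along monitored computations. -/
def IReach : Mon × Srv → Mon × Srv → Prop :=
  Relation.ReflTransGen (fun x y => ∃ ℓ, IStep x ℓ y)

/-- Rejecting monitor states: conjunctions `no × ⋯ × no` (incl. the single `no`). -/
inductive IsRej : Mon → Prop where
  | no : IsRej (.verd .no)
  | conj : ∀ {m n}, IsRej m → IsRej n → IsRej (.conj m n)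

/-- `Rej p m`: some monitored computation from `m ◁ p` reaches a rejecting state. -/
def Rej (p : Srv) (m : Mon) : Prop :=
  ∃ m' p', IReach (m, p) (m', p') ∧ IsRej m'

/-- Monitor synthesis from a server specification. -/
def synth : Srv → Mon
  | .nil => .verd .stp
  | .pre a p => .choice (.nact a (.verd .no)) (.act a (synth p))
  | .ext p q => .conj (synth p) (synth q)
  | .int p q => .conj (synth p) (synth q)

/-- Traces (finite sequences of visible actions) of a server. -/
inductive STrace : Srv → List Act → Prop where
  | nil : ∀ (p : Srv), STrace p []
  | tau : ∀ {p p' t}, SStep p none p' → STrace p' t → STrace p t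
  | act : ∀ {p a p' t}, SStep p (some a) p' → STrace p' t → STrace p (a :: t)

/-- Traces of a monitored system. -/
inductive ITrace : Mon × Srv → List Act → Prop where
  | nil : ∀ (x : Mon × Srv), ITrace x []
  | tau : ∀ {x y t}, IStep x none y → ITrace y t → ITrace x t
  | act : ∀ {x a y t}, IStep x (some a) y → ITrace y t → ITrace x (a :: t)

/-- Weak visible transition: τ-steps followed by a visible action. -/
def WAct (p : Srv) (a : Act) (p' : Srv) : Prop :=
  ∃ p₀, Relation.ReflTransGen (fun x y => SStep x none y) p p₀ ∧ SStep p₀ (some a) p'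

/-! Along a monitored computation from `(m₁ × m₂) ◁ q`, the monitor either is the verdict `end`,
which persists and is not rejecting, or is a conjunction `n₁ × n₂` in which each `nᵢ` is reached
from `mᵢ ◁ q` along the same server computation. -/

theorem IStep.fst_eq_verd {v : Verd} {p : Srv} {ℓ : Option Act} {y : Mon × Srv}
    (h : IStep (.verd v, p) ℓ y) : y.1 = .verd v := by
  cases h with
  | mon _ hm => cases hm; rfl
  | ter _ hstuck => exact absurd ⟨_, MStep.verd v _⟩ hstuck
  | asy => rfl

theorem IReach.of_conj {m₁ m₂ : Mon} {p : Srv} {y : Mon × Srv}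
    (h : IReach (.conj m₁ m₂, p) y) :
    y.1 = .verd .stp ∨
      ∃ n₁ n₂, y.1 = .conj n₁ n₂ ∧ IReach (m₁, p) (n₁, y.2) ∧ IReach (m₂, p) (n₂, y.2) := by
  induction h with
  | refl => exact .inr ⟨m₁, m₂, rfl, .refl, .refl⟩
  | @tail x z _ hstep ih =>
    obtain ⟨ℓ, hstep⟩ := hstep
    obtain ⟨n, q⟩ := x
    rcases ih with hstp | ⟨n₁, n₂, hconj, r₁, r₂⟩
    · subst hstp
      exact .inl hstep.fst_eq_verd
    · subst hconj
      cases hstep with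
      | mon hs hm =>
        cases hm with
        | conj h₁ h₂ => exact .inr ⟨_, _, rfl, r₁.tail ⟨_, .mon hs h₁⟩, r₂.tail ⟨_, .mon hs h₂⟩⟩
      | ter => exact .inl rfl
      | asy _ hs => exact .inr ⟨_, _, rfl, r₁.tail ⟨_, .asy _ hs⟩, r₂.tail ⟨_, .asy _ hs⟩⟩

/-- Rejection of a conjunction monitor entails rejection by each conjunct. -/
theorem rej_conj (q : Srv) (m₁ m₂ : Mon) :
    Rej q (.conj m₁ m₂) → Rej q m₁ ∧ Rej q m₂ := by
  rintro ⟨m', p', hreach, hrej⟩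
  rcases hreach.of_conj with hstp | ⟨n₁, n₂, hconj, r₁, r₂⟩
  · subst hstp
    cases hrej
  · subst hconj
    obtain _ | ⟨j₁, j₂⟩ := hrej
    exact ⟨⟨n₁, p', r₁, j₁⟩, ⟨n₂, p', r₂, j₂⟩⟩
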